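/- Let A ∈ ℝ^{I×R}, B ∈ ℝ^{J×R}, d_1,…,d_m ∈ ℝ^R, and 2 ≤ m ≤ min(I,J,R). Then the polarized compound matrix satisfies D^{m−1}(A Diag(d_1) B^T, …, A Diag(d_m) B^T) = C_m(A) · Diag(PC_m([d_1 … d_m])) · C_m(B)^T, where [d_1 … d_m] is the R×m matrix with columns d_1,…,d_m and PC_m([d_1 … d_m]) is its m-th permanental compound matrix (a vector of length C(R,m)). -/

import Mathlib

/-!
Over `MvPolynomial (Fin m) ℝ` the pencil `∑ᵢ xᵢ • A Diag(dᵢ) Bᵀ` factors as `A Diag(p) Bᵀ` with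
`p r = ∑ᵢ xᵢ dᵢ(r)`. Compound matrices are multiplicative (Cauchy–Binet), and the compound of a
diagonal matrix is diagonal, so the `m`-th compound of the pencil is
`C_m(A) Diag(u ↦ ∏_{r ∈ u} p r) C_m(B)ᵀ`. Finally, the coefficient of `x₁ ⋯ xₘ` in
`∏_{r ∈ u} ∑ᵢ xᵢ dᵢ(r)` is the permanent of the rows `u` of `[d₁ … dₘ]`.
-/

open scoped BigOperators Matrix

noncomputable section

/-- The permanent of a square matrix over a commutative ring. -/
def permanent {α : Type*} [CommRing α] {n : ℕ} (A : Matrix (Fin n) (Fin n) α) : α :=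
  ∑ σ : Equiv.Perm (Fin n), ∏ i, A i (σ i)

/-- The `m`-th compound matrix: the matrix of all `m × m` minors, with rows indexed by
`m`-element subsets of the rows and columns indexed by `m`-element subsets of the columns
(a subset of size `m` is enumerated in increasing order). -/
def compound {α : Type*} [CommRing α] {I J : ℕ} (m : ℕ) (A : Matrix (Fin I) (Fin J) α) :
    Matrix {s : Finset (Fin I) // s.card = m} {t : Finset (Fin J) // t.card = m} α :=
  Matrix.of fun s t => Matrix.det (Matrix.of fun a b : Fin m =>
    A (s.1.orderIsoOfFin s.2 a : Fin I) (t.1.orderIsoOfFin t.2 b : Fin J))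

/-- The polarized compound matrix `D^{m−1}(T_1,…,T_m)`: the `C(I,m) × C(J,m)` matrix
`∂^m C_m(x_1 T_1 + … + x_m T_m)/∂x_1 ⋯ ∂x_m` at `x = 0`, realized entrywise as the
coefficient of the monomial `x_1 ⋯ x_m` in the corresponding entry of the `m`-th compound
matrix of `x_1 T_1 + … + x_m T_m`; equivalently, its `(S,T)` entry is the mixed
discriminant of the submatrices `T_1(S,T),…,T_m(S,T)`. -/
noncomputable def polarizedCompound {I J m : ℕ} (T : Fin m → Matrix (Fin I) (Fin J) ℝ) :
    Matrix {s : Finset (Fin I) // s.card = m} {t : Finset (Fin J) // t.card = m} ℝ :=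
  Matrix.of fun s t =>
    MvPolynomial.coeff (∑ i : Fin m, Finsupp.single i 1)
      (compound m (Matrix.of fun a b =>
        ∑ i : Fin m, MvPolynomial.X i * MvPolynomial.C (T i a b)) s t)

open Finset Function Equiv MvPolynomial
open Matrix hiding permanent

section CauchyBinet

variable {α : Type*} [CommRing α]

theorem det_mul_eq_sum_prod_mul_det_submatrix {n ι : Type*} [Fintype n] [DecidableEq n]
    [Fintype ι] (M : Matrix n ι α) (N : Matrix ι n α) :
    det (M * N) = ∑ p : n → ι, (∏ i, N (p i) i) * det (M.submatrix id p) := by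
  simp only [det_apply', mul_apply, prod_univ_sum, Finset.mul_sum, Fintype.piFinset_univ,
    submatrix_apply, id]
  rw [Finset.sum_comm]
  refine sum_congr rfl fun p _ => sum_congr rfl fun σ _ => ?_
  rw [prod_mul_distrib]
  ring

theorem det_submatrix_eq_zero_of_not_injective {n ι : Type*} [Fintype n] [DecidableEq n]
    (M : Matrix n ι α) {p : n → ι} (hp : ¬Injective p) : det (M.submatrix id p) = 0 := by
  obtain ⟨i, j, hpij, hij⟩ := not_injective_iff.mp hp
  exact det_zero_of_column_eq hij fun k => by simp [hpij]

variable {ι : Type*} [LinearOrder ι] {m : ℕ}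

theorem image_univ_orderEmbOfFin_comp_perm (u : Finset ι) (hu : u.card = m)
    (τ : Perm (Fin m)) : univ.image (u.orderEmbOfFin hu ∘ τ) = u := by
  rw [← image_image, image_univ_equiv, image_orderEmbOfFin_univ]

theorem injective_orderEmbOfFin_comp_perm :
    Injective fun x : {u : Finset ι // u.card = m} × Perm (Fin m) =>
      x.1.1.orderEmbOfFin x.1.2 ∘ x.2 := by
  rintro ⟨⟨u, hu⟩, τ⟩ ⟨⟨v, hv⟩, ρ⟩ h
  obtain rfl : u = v := by
    rw [← image_univ_orderEmbOfFin_comp_perm u hu τ, ← image_univ_orderEmbOfFin_comp_perm v hv ρ]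
    exact congrArg (univ.image ·) h
  exact Prod.ext rfl (Equiv.ext fun i => (u.orderEmbOfFin hu).injective (congrFun h i))

theorem exists_orderEmbOfFin_comp_perm_eq {p : Fin m → ι} (hp : Injective p) :
    ∃ (u : {u : Finset ι // u.card = m}) (τ : Perm (Fin m)), u.1.orderEmbOfFin u.2 ∘ τ = p := by
  set u := univ.image p
  have hu : u.card = m := by rw [card_image_of_injective _ hp, card_univ, Fintype.card_fin]
  let τ : Fin m → Fin m := fun i => (u.orderIsoOfFin hu).symm ⟨p i, mem_image_of_mem p (mem_univ i)⟩
  have hτ : Bijective τ := Finite.injective_iff_bijective.mp fun i j h =>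
    hp (congrArg Subtype.val ((u.orderIsoOfFin hu).symm.injective h))
  exact ⟨⟨u, hu⟩, Equiv.ofBijective τ hτ, funext fun i => by simp [τ, ← coe_orderIsoOfFin_apply]⟩

variable [Fintype ι]

theorem sum_injective_eq_sum_sum_orderEmbOfFin_comp_perm {β : Type*} [AddCommMonoid β]
    (f : (Fin m → ι) → β) :
    ∑ p : Fin m → ι with Injective p, f p =
      ∑ u : {u : Finset ι // u.card = m}, ∑ τ : Perm (Fin m), f (u.1.orderEmbOfFin u.2 ∘ τ) := by
  have hrange : univ.image (fun x : {u : Finset ι // u.card = m} × Perm (Fin m) =>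
      x.1.1.orderEmbOfFin x.1.2 ∘ x.2) = univ.filter Injective := by
    ext p
    simp only [mem_image, mem_univ, true_and, mem_filter_univ, Prod.exists]
    exact ⟨fun ⟨u, τ, hp⟩ => hp ▸ (u.1.orderEmbOfFin u.2).injective.comp τ.injective,
      exists_orderEmbOfFin_comp_perm_eq⟩
  rw [← hrange, sum_image fun x _ y _ h => injective_orderEmbOfFin_comp_perm h,
    Fintype.sum_prod_type]

/-- **Cauchy–Binet formula.** -/
theorem det_mul_eq_sum_det_submatrix_mul_det_submatrix (M : Matrix (Fin m) ι α)
    (N : Matrix ι (Fin m) α) :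
    det (M * N) = ∑ u : {u : Finset ι // u.card = m},
      det (M.submatrix id (u.1.orderEmbOfFin u.2)) *
        det (N.submatrix (u.1.orderEmbOfFin u.2) id) := by
  have hinj : ∀ p : Fin m → ι, (∏ i, N (p i) i) * det (M.submatrix id p) ≠ 0 → Injective p :=
    fun p hp => by_contra fun hinj => hp (by
      rw [det_submatrix_eq_zero_of_not_injective M hinj, mul_zero])
  rw [det_mul_eq_sum_prod_mul_det_submatrix, ← sum_filter_of_ne fun p _ => hinj p,
    sum_injective_eq_sum_sum_orderEmbOfFin_comp_perm]
  refine sum_congr rfl fun u _ => ?_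
  set e := u.1.orderEmbOfFin u.2
  calc ∑ τ : Perm (Fin m), (∏ i, N (e (τ i)) i) * det (M.submatrix id (e ∘ τ))
      = ∑ τ : Perm (Fin m), (∏ i, N (e (τ i)) i) * (Perm.sign τ * det (M.submatrix id e)) := by
        simp only [← det_permute', submatrix_submatrix, comp_id]
    _ = det (M.submatrix id e) * det (N.submatrix e id) := by
        rw [det_apply (N.submatrix e id), Finset.mul_sum]
        refine sum_congr rfl fun τ _ => ?_
        simp only [submatrix_apply, id, Units.smul_def, zsmul_eq_mul]
        ring

end CauchyBinet

theorem mul_diagonal_mul_transpose_apply {l n o α : Type*} [Fintype n] [DecidableEq n]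
    [NonUnitalNonAssocSemiring α] (M : Matrix l n α) (v : n → α) (N : Matrix o n α) (i : l)
    (j : o) : (M * diagonal v * Nᵀ) i j = ∑ k, M i k * v k * N j k := by
  rw [mul_apply]
  simp only [mul_diagonal, transpose_apply]

section Compound

variable {α : Type*} [CommRing α] {I J R m : ℕ}

theorem compound_apply (A : Matrix (Fin I) (Fin J) α) (s : {s : Finset (Fin I) // s.card = m})
    (t : {t : Finset (Fin J) // t.card = m}) :
    compound m A s t = det (A.submatrix (s.1.orderEmbOfFin s.2) (t.1.orderEmbOfFin t.2)) :=
  rfl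

theorem compound_mul (M : Matrix (Fin I) (Fin R) α) (N : Matrix (Fin R) (Fin J) α) :
    compound m (M * N) = compound m M * compound m N := by
  ext s t
  rw [compound_apply, submatrix_mul _ _ _ id _ bijective_id,
    det_mul_eq_sum_det_submatrix_mul_det_submatrix, mul_apply]
  simp only [submatrix_submatrix, comp_id, id_comp, compound_apply]

theorem compound_diagonal (d : Fin R → α) :
    compound m (diagonal d) = diagonal fun u => ∏ k, d (u.1.orderEmbOfFin u.2 k) := by
  ext u v
  rw [compound_apply]
  by_cases huv : u = v
  · subst huv
    rw [submatrix_diagonal _ _ (u.1.orderEmbOfFin u.2).injective, det_diagonal, diagonal_apply_eq]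
    rfl
  · obtain ⟨x, hxu, hxv⟩ : ∃ x ∈ u.1, x ∉ v.1 := by
      by_contra! h
      exact huv (Subtype.ext (eq_of_subset_of_card_le h (by rw [u.2, v.2])))
    rw [diagonal_apply_ne _ huv]
    refine det_eq_zero_of_row_eq_zero ((u.1.orderIsoOfFin u.2).symm ⟨x, hxu⟩) fun k => ?_
    rw [submatrix_apply, ← coe_orderIsoOfFin_apply, OrderIso.apply_symm_apply]
    exact diagonal_apply_ne _ fun h => hxv (by
      rw [show x = _ from h]; exact orderEmbOfFin_mem _ _ k)

theorem compound_transpose (A : Matrix (Fin I) (Fin J) α) :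
    compound m Aᵀ = (compound m A)ᵀ := by
  ext s t
  rw [compound_apply, transpose_apply, compound_apply, ← det_transpose, transpose_submatrix,
    transpose_transpose]

theorem compound_map {β : Type*} [CommRing β] (f : α →+* β) (A : Matrix (Fin I) (Fin J) α) :
    compound m (A.map f) = (compound m A).map f := by
  ext s t
  rw [map_apply, compound_apply, compound_apply, RingHom.map_det, submatrix_map]
  rfl

end Compound

theorem polarizedCompound_apply {I J m : ℕ} (T : Fin m → Matrix (Fin I) (Fin J) ℝ)
    (s : {s : Finset (Fin I) // s.card = m}) (t : {t : Finset (Fin J) // t.card = m}) :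
    polarizedCompound T s t = coeff (∑ i, Finsupp.single i 1)
      (compound m (of fun a b => ∑ i, X i * C (T i a b)) s t) :=
  rfl

theorem coeff_prod_sum_X_mul_C_eq_permanent {α : Type*} [CommRing α] {m : ℕ}
    (w : Matrix (Fin m) (Fin m) α) :
    coeff (∑ i, Finsupp.single i 1) (∏ k, ∑ i, X i * C (w k i)) = permanent w := by
  have hmon : ∀ g : Fin m → Fin m, ∏ k, X (g k) * C (w k (g k)) =
      monomial (∑ k, Finsupp.single (g k) 1) (∏ k, w k (g k)) := fun g => by
    simp only [monomial_sum_prod, ← C_mul_X_eq_monomial, mul_comm]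
  have hexp : ∀ g : Fin m → Fin m,
      ∑ k, Finsupp.single (g k) 1 = ∑ i, Finsupp.single i 1 ↔ Bijective g := by
    intro g
    refine ⟨fun h => Finite.surjective_iff_bijective.mp fun i => ?_,
      fun hg => Fintype.sum_bijective g hg _ _ fun _ => rfl⟩
    by_contra! hi
    have := DFunLike.congr_fun h i
    simp [Finsupp.single_apply, hi] at this
  simp only [prod_univ_sum, Fintype.piFinset_univ, coeff_sum, hmon, coeff_monomial, hexp,
    ← sum_filter]
  exact sum_bij (fun g hg => Equiv.ofBijective g (mem_filter.1 hg).2) (fun _ _ => mem_univ _)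
    (fun _ _ _ _ h => by injection h)
    (fun σ _ => ⟨σ, mem_filter.2 ⟨mem_univ _, σ.bijective⟩, coe_fn_injective rfl⟩) fun _ _ => rfl

theorem stmt17_general {I J R m : ℕ} (A : Matrix (Fin I) (Fin R) ℝ) (B : Matrix (Fin J) (Fin R) ℝ)
    (d : Fin m → Fin R → ℝ) :
    polarizedCompound (fun i => A * Matrix.diagonal (d i) * Bᵀ) =
      compound m A *
        Matrix.diagonal (fun u : {u : Finset (Fin R) // u.card = m} =>
          permanent (Matrix.of fun a b : Fin m => d b (u.1.orderIsoOfFin u.2 a : Fin R))) *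
        (compound m B)ᵀ := by
  set P : Fin R → MvPolynomial (Fin m) ℝ := fun r => ∑ i, X i * C (d i r)
  have hpencil : (of fun a b => ∑ i, X i * C ((A * diagonal (d i) * Bᵀ) a b)) =
      A.map (C : ℝ →+* MvPolynomial (Fin m) ℝ) * diagonal P *
        (B.map (C : ℝ →+* MvPolynomial (Fin m) ℝ))ᵀ := by
    refine Matrix.ext fun a b => ?_
    simp only [of_apply, mul_diagonal_mul_transpose_apply, map_apply, P, map_sum, map_mul,
      Finset.mul_sum, Finset.sum_mul]
    rw [Finset.sum_comm]
    exact sum_congr rfl fun r _ => sum_congr rfl fun i _ => by ring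
  ext s t
  rw [polarizedCompound_apply, hpencil, compound_mul, compound_mul, compound_diagonal,
    compound_transpose, compound_map, compound_map, mul_diagonal_mul_transpose_apply,
    mul_diagonal_mul_transpose_apply, coeff_sum]
  refine sum_congr rfl fun u _ => ?_
  rw [map_apply, map_apply, mul_right_comm, ← C_mul, coeff_C_mul,
    ← coeff_prod_sum_X_mul_C_eq_permanent]
  simp only [P, of_apply, coe_orderIsoOfFin_apply]
  ring

/-- For `A ∈ ℝ^{I×R}`, `B ∈ ℝ^{J×R}`, `d_1,…,d_m ∈ ℝ^R` and
`2 ≤ m ≤ min(I,J,R)`: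
`D^{m−1}(A Diag(d_1) Bᵀ, …, A Diag(d_m) Bᵀ) = C_m(A) · Diag(PC_m([d_1 … d_m])) · C_m(B)ᵀ`,
where `PC_m([d_1 … d_m])` is the `m`-th permanental compound of the `R × m` matrix with
columns `d_1,…,d_m`, i.e. the vector (indexed by `m`-element subsets `u` of `{1,…,R}`) of
permanents of its `m × m` submatrices. -/
theorem stmt17 {I J R m : ℕ} (A : Matrix (Fin I) (Fin R) ℝ) (B : Matrix (Fin J) (Fin R) ℝ)
    (d : Fin m → Fin R → ℝ) (hm2 : 2 ≤ m) (hmI : m ≤ I) (hmJ : m ≤ J) (hmR : m ≤ R) :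
    polarizedCompound (fun i => A * Matrix.diagonal (d i) * Bᵀ) =
      compound m A *
        Matrix.diagonal (fun u : {u : Finset (Fin R) // u.card = m} =>
          permanent (Matrix.of fun a b : Fin m => d b (u.1.orderIsoOfFin u.2 a : Fin R))) *
        (compound m B)ᵀ :=
  stmt17_general A B d
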